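/- Let κ : V(G) → ℕ and suppose v is a vertex of G with deg_G(v) = κ(v). Then G is κ-degenerate if and only if G \ {v} is κ-degenerate (with κ restricted to V(G) \ {v}). -/

import Mathlib

open Finset

/-- `D` is a `τ`-dynamic monopoly for `G`: there is a partition
`D₀ ∪ D₁ ∪ ⋯ ∪ D_k` of the vertex set with `D₀ = D` such that every vertex `v ∈ D_{i+1}`
has at least `τ v` neighbours in `D₀ ∪ ⋯ ∪ D_i`. -/
def DynMono {V : Type*} [Fintype V] [DecidableEq V] (G : SimpleGraph V) [DecidableRel G.Adj]
    (τ : V → ℤ) (D : Finset V) : Prop :=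
  ∃ (k : ℕ) (Ds : ℕ → Finset V),
    Ds 0 = D ∧
    (∀ i ≤ k, ∀ j ≤ k, i ≠ j → Disjoint (Ds i) (Ds j)) ∧
    (Finset.range (k + 1)).biUnion Ds = Finset.univ ∧
    (∀ i < k, ∀ v ∈ Ds (i + 1),
      τ v ≤ ((((Finset.range (i + 1)).biUnion Ds).filter (fun u => G.Adj v u)).card : ℤ))

/-- The induced subgraph of `G` on the vertex set `A` is `κ`-degenerate: the vertices of `A`
can be listed as `v₁, …, v_m` so that for each `i` the degree of `v_i` in the subgraph
induced on `{v₁, …, v_i}` is at most `κ v_i`. -/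
def KDegenOn {V : Type*} [DecidableEq V] (G : SimpleGraph V) [DecidableRel G.Adj]
    (κ : V → ℕ) (A : Finset V) : Prop :=
  ∃ l : List V, l.Nodup ∧ l.toFinset = A ∧
    ∀ i : Fin l.length,
      ((l.take i).filter (fun u => decide (G.Adj (l.get i) u))).length ≤ κ (l.get i)

/-- `G` is `k`-degenerate: every nonempty subgraph of `G` has a vertex of degree at most `k`. -/
def Degen {V : Type*} (G : SimpleGraph V) (k : ℕ) : Prop :=
  ∀ K : G.Subgraph, K.verts.Nonempty → ∃ v ∈ K.verts, (K.neighborSet v).ncard ≤ k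

/-- The induced subgraph of `G` on the vertex set `A` is `k`-degenerate: every nonempty
subgraph of it (equivalently, every nonempty induced subgraph on some `S ⊆ A`) has a vertex
of degree at most `k`. -/
def DegenOn {V : Type*} (G : SimpleGraph V) [DecidableRel G.Adj] (k : ℕ) (A : Finset V) : Prop :=
  ∀ S ⊆ A, S.Nonempty → ∃ v ∈ S, (S.filter (fun u => G.Adj v u)).card ≤ k

/-- A (nonempty) subgraph `K` of `G` is resistant w.r.t. the threshold assignment `τ` if
every vertex `v` of `K` satisfies `deg_K v ≥ deg_G v - τ v + 1`. -/
def Resistant {V : Type*} [Fintype V] (G : SimpleGraph V) [DecidableRel G.Adj]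
    (τ : V → ℤ) (K : G.Subgraph) : Prop :=
  K.verts.Nonempty ∧ ∀ v ∈ K.verts, (G.degree v : ℤ) - τ v + 1 ≤ ((K.neighborSet v).ncard : ℤ)

/-! Removing vertices from a `κ`-degeneracy ordering leaves one, which gives the forward
direction. Conversely, since `deg v ≤ κ v`, appending `v` at the end of an ordering of `G - v`
yields an ordering of `G`. -/

def IsDegenOrdering {V : Type*} (G : SimpleGraph V) [DecidableRel G.Adj] (κ : V → ℕ)
    (l : List V) : Prop :=
  ∀ i : Fin l.length,
    ((l.take i).filter (fun u => decide (G.Adj (l.get i) u))).length ≤ κ (l.get i)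

theorem List.Sublist.exists_get_eq_take_sublist {α : Type*} {l' l : List α} (h : l'.Sublist l)
    (i : Fin l'.length) :
    ∃ j : Fin l.length, l.get j = l'.get i ∧ (l'.take i).Sublist (l.take j) := by
  induction h with
  | slnil => exact absurd i.2 (by simp)
  | @cons l₁ l₂ a _ ih =>
    obtain ⟨j, hj, hs⟩ := ih i
    exact ⟨j.succ, by simpa using hj, by simpa [List.take_succ_cons] using hs.cons a⟩
  | @cons_cons l₁ l₂ a _ ih =>
    rcases i with ⟨_ | i, hi⟩
    · exact ⟨⟨0, by simp⟩, rfl, by simp⟩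
    · obtain ⟨j, hj, hs⟩ := ih ⟨i, by simpa using hi⟩
      exact ⟨j.succ, by simpa using hj, by simpa [List.take_succ_cons] using hs.cons_cons a⟩

section

variable {V : Type*} {G : SimpleGraph V} [DecidableRel G.Adj] {κ : V → ℕ}

theorem IsDegenOrdering.sublist {l l' : List V} (hl : IsDegenOrdering G κ l) (h : l'.Sublist l) :
    IsDegenOrdering G κ l' := by
  intro i
  obtain ⟨j, hj, hs⟩ := h.exists_get_eq_take_sublist i
  rw [← hj]
  exact ((hs.filter _).length_le).trans (hl j)

theorem IsDegenOrdering.append_singleton {l : List V} {v : V} (hl : IsDegenOrdering G κ l)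
    (hv : (l.filter (fun u => decide (G.Adj v u))).length ≤ κ v) :
    IsDegenOrdering G κ (l ++ [v]) := by
  rintro ⟨i, hi⟩
  rw [List.length_append, List.length_singleton] at hi
  rcases (Nat.lt_succ_iff.mp hi).lt_or_eq with hi | rfl
  · simpa [List.getElem_append_left hi, List.take_append_of_le_length hi.le] using hl ⟨i, hi⟩
  · simpa using hv

variable [DecidableEq V]

theorem KDegenOn.subset {A B : Finset V} (hA : KDegenOn G κ A) (hBA : B ⊆ A) :
    KDegenOn G κ B := by
  obtain ⟨l, hnd, hfin, hl⟩ := hA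
  refine ⟨l.filter (· ∈ B), hnd.filter _, ?_, IsDegenOrdering.sublist hl List.filter_sublist⟩
  ext x
  rw [← hfin] at hBA
  simpa using fun hx => List.mem_toFinset.mp (hBA hx)

theorem KDegenOn.insert {A : Finset V} {v : V} (hA : KDegenOn G κ A) (hvA : v ∉ A)
    (hv : (A.filter (G.Adj v)).card ≤ κ v) : KDegenOn G κ (insert v A) := by
  obtain ⟨l, hnd, rfl, hl⟩ := hA
  refine ⟨l ++ [v], ?_, ?_, IsDegenOrdering.append_singleton hl ?_⟩
  · simpa using hnd.concat (by simpa using hvA)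
  · ext x
    simp
  · rw [← List.toFinset_card_of_nodup (hnd.filter _), List.toFinset_filter]
    simpa using hv

end

theorem stmt5 {V : Type*} [Fintype V] [DecidableEq V] (G : SimpleGraph V) [DecidableRel G.Adj]
    (κ : V → ℕ) (v : V) (hv : G.degree v = κ v) :
    KDegenOn G κ Finset.univ ↔ KDegenOn G κ (Finset.univ.erase v) := by
  refine ⟨fun h => h.subset (Finset.erase_subset v _), fun h => ?_⟩
  have hdeg : ((Finset.univ.erase v).filter (G.Adj v)).card ≤ κ v := by
    rw [← hv, ← G.card_neighborFinset_eq_degree, G.neighborFinset_eq_filter]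
    exact Finset.card_le_card (Finset.filter_subset_filter _ (Finset.erase_subset v _))
  simpa using h.insert (Finset.notMem_erase v _) hdeg
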